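/- arXiv:1311.3323 — 3 statements merged into one kernel-verified Lean document; each statement's English description precedes it below -/
import Mathlib

section
/- Let C ⊆ ℝ² be a convex body (a compact convex set with nonempty interior) and let Γ be a segment barrier for C given by segments [aᵢ, bᵢ]. Then for every unit vector u ∈ ℝ², the total length of the projections of the segments onto the direction u is at least the width of C in direction u; that is, Σᵢ |⟨bᵢ − aᵢ, u⟩| ≥ sup_{x ∈ C} ⟨x, u⟩ − inf_{x ∈ C} ⟨x, u⟩. -/
/-!
The linear functional `x ↦ ⟪x, u⟫` is constant along the lines in the direction of any nonzero
`v ⊥ u`. Such a line through a point of `C` meets one of the segments, so the projection of the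
barrier covers the projection of `C`. The latter is an interval of length equal to the width, while
the projection of `[aᵢ, bᵢ]` is an interval of length `|⟪bᵢ - aᵢ, u⟫|`; countable subadditivity of
Lebesgue measure on `ℝ` concludes.
-/

open MeasureTheory Set

noncomputable section

abbrev Pt : Type := EuclideanSpace ℝ (Fin 2)

def IsLine (l : Set Pt) : Prop :=
  ∃ p v : Pt, v ≠ 0 ∧ l = {q : Pt | ∃ t : ℝ, q = p + t • v}

def IsBarrier (Γ C : Set Pt) : Prop :=
  ∀ l : Set Pt, IsLine l → (l ∩ C).Nonempty → (l ∩ Γ).Nonempty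

def unitSquare : Set Pt := {p : Pt | p 0 ∈ Icc (0:ℝ) 1 ∧ p 1 ∈ Icc (0:ℝ) 1}

theorem Real.ofReal_csSup_sub_csInf_le_volume {s : Set ℝ} (hs : IsPreconnected s)
    (hb : Bornology.IsBounded s) : ENNReal.ofReal (sSup s - sInf s) ≤ volume s := by
  rcases s.eq_empty_or_nonempty with rfl | hne
  · simp
  calc ENNReal.ofReal (sSup s - sInf s) = volume (Ioo (sInf s) (sSup s)) := Real.volume_Ioo.symm
    _ ≤ volume s :=
      measure_mono (IsConnected.Ioo_csInf_csSup_subset ⟨hne, hs⟩ hb.bddBelow hb.bddAbove)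

theorem Real.volume_image_segment {E : Type*} [AddCommGroup E] [Module ℝ E] (f : E →ₗ[ℝ] ℝ)
    (a b : E) : volume (f '' segment ℝ a b) = ENNReal.ofReal |f (b - a)| := by
  rw [← f.coe_toAffineMap, image_segment, segment_eq_uIcc, Real.volume_interval,
    f.coe_toAffineMap, map_sub]

theorem LinearMap.exists_ne_zero_apply_eq_zero_of_one_lt_finrank {K V : Type*} [Field K]
    [AddCommGroup V] [Module K V] [FiniteDimensional K V] (h : 1 < Module.finrank K V)
    (f : V →ₗ[K] K) : ∃ v, v ≠ 0 ∧ f v = 0 := by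
  obtain ⟨v, hv, hv0⟩ := Submodule.exists_mem_ne_zero_of_ne_bot
    (f.ker_ne_bot_of_finrank_lt (by rwa [Module.finrank_self]))
  exact ⟨v, hv0, hv⟩

theorem IsBarrier.image_subset_image {Γ C : Set Pt} (h : IsBarrier Γ C) (f : Pt →ₗ[ℝ] ℝ) :
    f '' C ⊆ f '' Γ := by
  obtain ⟨v, hv, hfv⟩ := f.exists_ne_zero_apply_eq_zero_of_one_lt_finrank (by simp)
  rintro _ ⟨z, hz, rfl⟩
  obtain ⟨_, ⟨t, rfl⟩, hw⟩ := h _ ⟨z, v, hv, rfl⟩ ⟨z, ⟨0, by simp⟩, hz⟩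
  exact ⟨_, hw, by simp [hfv]⟩

theorem segment_barrier_projection_ge_width_general
    (C : Set Pt) (hCcomp : IsCompact C) (hCconv : Convex ℝ C)
    (a b : ℕ → Pt)
    (hbar : IsBarrier (⋃ i, segment ℝ (a i) (b i)) C)
    (hsum : Summable fun i => ‖b i - a i‖)
    (u : Pt) :
    sSup ((fun x : Pt => (inner ℝ x u : ℝ)) '' C) - sInf ((fun x : Pt => (inner ℝ x u : ℝ)) '' C)
      ≤ ∑' i, |(inner ℝ (b i - a i) u : ℝ)| := by
  let f : Pt →ₗ[ℝ] ℝ := (innerₗ Pt).flip u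
  have hproj : Summable fun i => |f (b i - a i)| :=
    (hsum.mul_right ‖u‖).of_nonneg_of_le (fun _ => abs_nonneg _)
      (fun i => abs_real_inner_le_norm (b i - a i) u)
  change sSup (f '' C) - sInf (f '' C) ≤ ∑' i, |f (b i - a i)|
  rw [← ENNReal.ofReal_le_ofReal_iff (tsum_nonneg fun _ => abs_nonneg _)]
  calc ENNReal.ofReal (sSup (f '' C) - sInf (f '' C)) ≤ volume (f '' C) :=
        Real.ofReal_csSup_sub_csInf_le_volume (hCconv.linear_image f).isPreconnected
          (hCcomp.image f.continuous_of_finiteDimensional).isBounded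
    _ ≤ volume (⋃ i, f '' segment ℝ (a i) (b i)) :=
        measure_mono (image_iUnion ▸ hbar.image_subset_image f)
    _ ≤ ∑' i, volume (f '' segment ℝ (a i) (b i)) := measure_iUnion_le _
    _ = ENNReal.ofReal (∑' i, |f (b i - a i)|) := by
        simp_rw [Real.volume_image_segment]
        exact (ENNReal.ofReal_tsum_of_nonneg (fun _ => abs_nonneg _) hproj).symm

/-- for a segment barrier of a convex body C, the total projection length of
the segments onto any unit direction u is at least the width of C in direction u. -/
theorem segment_barrier_projection_ge_width
    (C : Set Pt) (hCcomp : IsCompact C) (hCconv : Convex ℝ C)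
    (hCint : (interior C).Nonempty)
    (a b : ℕ → Pt) (hab : ∀ i, a i ≠ b i)
    (hbar : IsBarrier (⋃ i, segment ℝ (a i) (b i)) C)
    (hsum : Summable fun i => ‖b i - a i‖)
    (u : Pt) (hu : ‖u‖ = 1) :
    sSup ((fun x : Pt => (inner ℝ x u : ℝ)) '' C) - sInf ((fun x : Pt => (inner ℝ x u : ℝ)) '' C)
      ≤ ∑' i, |(inner ℝ (b i - a i) u : ℝ)| :=
  segment_barrier_projection_ge_width_general C hCcomp hCconv a b hbar hsum u
end
end

section
/- With the setup parameters δ = 10⁻¹² and sin φ = 10⁻⁴, let Γ be a segment barrier for the unit square U with total length L ≤ 2 + δ, partitioned into the almost horizontal segments X, the almost vertical segments Y, and the remaining segments Z. Then for any intervals I, J ⊆ ℝ (not necessarily contained in [0,1]): Σ_{s ∈ X} H¹(s ∩ (I × ℝ)) ≤ λ(I ∩ [0,1]) + 5·10⁻⁴ and Σ_{s ∈ Y} H¹(s ∩ (ℝ × J)) ≤ λ(J ∩ [0,1]) + 5·10⁻⁴, where λ denotes 1-dimensional Lebesgue measure. -/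
/-!
A line meeting the square meets the barrier, so in every direction the projections of the
segments cover the projection of the square. Projecting on the axes gives `∑ |Δx| ≥ 1` and
`∑ |Δy| ≥ 1`; projecting on the two diagonals gives `∑ max (|Δx|, |Δy|) ≥ 2`. Compared with the
total length `2 + δ`, the first bound leaves the almost horizontal (and the almost vertical)
segments a total length of at most `(1 + δ) / (1 - ε)`, and the second, since
`max (|Δx|, |Δy|) ≤ (1 - ε² / 2) ℓ` for the remaining segments, leaves those at most `2δ / ε²`.
Finally `[0,1] \ I` is covered by the `x`-projections of the segment parts outside the strip
`I × ℝ`: an almost horizontal segment contributes at most its length minus its length inside the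
strip, an almost vertical one at most `ε ℓ`, any other one at most `ℓ`.
-/

open MeasureTheory Set

noncomputable section

/-- A segment [a, b] is almost horizontal if its direction makes angle at most
φ = arcsin 10⁻⁴ with the x-axis, i.e. |(b − a)₂| ≤ 10⁻⁴ ‖b − a‖. -/
def AlmostHorizontal (a b : Pt) : Prop := |(b - a) 1| ≤ 10 ^ (-4 : ℤ) * ‖b - a‖

/-- A segment [a, b] is almost vertical if its direction makes angle at most
φ = arcsin 10⁻⁴ with the y-axis, i.e. |(b − a)₁| ≤ 10⁻⁴ ‖b − a‖. -/
def AlmostVertical (a b : Pt) : Prop := |(b - a) 0| ≤ 10 ^ (-4 : ℤ) * ‖b - a‖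

lemma abs_add_add_abs_sub_le_two_mul_max (u v : ℝ) : |u + v| + |u - v| ≤ 2 * max |u| |v| := by
  have := le_max_left |u| |v|
  have := le_max_right |u| |v|
  rcases abs_cases (u + v) with ⟨h₁, -⟩ | ⟨h₁, -⟩ <;>
    rcases abs_cases (u - v) with ⟨h₂, -⟩ | ⟨h₂, -⟩ <;>
    linarith [le_abs_self u, neg_abs_le u, le_abs_self v, neg_abs_le v]

lemma abs_add_sq_mul_le_of_sq_add_sq_eq {u w ℓ ε : ℝ} (hε : 0 ≤ ε) (hℓ : 0 ≤ ℓ)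
    (h : u ^ 2 + w ^ 2 = ℓ ^ 2) (hw : ε * ℓ ≤ |w|) : |u| + ε ^ 2 / 2 * ℓ ≤ ℓ := by
  have hwℓ : |w| ≤ ℓ := abs_le_of_sq_le_sq (by nlinarith) hℓ
  have hεℓ : ε * ℓ ≤ ℓ := hw.trans hwℓ
  have hu : u ^ 2 ≤ (ℓ - ε ^ 2 / 2 * ℓ) ^ 2 := by
    nlinarith [sq_abs w, mul_nonneg hε hℓ, mul_le_mul hw hw (mul_nonneg hε hℓ) (abs_nonneg w),
      mul_nonneg (mul_nonneg hε hε) (mul_nonneg hℓ hℓ)]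
  have : 0 ≤ ℓ - ε ^ 2 / 2 * ℓ := by nlinarith [mul_le_mul_of_nonneg_left hεℓ hε]
  linarith [abs_le_of_sq_le_sq hu this]

lemma Summable.tsum_add_mul_le {ι : Type*} {f g h : ι → ℝ} (hf : Summable f) (hg : Summable g)
    (hh : Summable h) (c : ℝ) (hle : ∀ i, f i + c * g i ≤ h i) :
    ∑' i, f i + c * ∑' i, g i ≤ ∑' i, h i := by
  rw [← tsum_mul_left, ← hf.tsum_add (hg.mul_left c)]
  exact (hf.add (hg.mul_left c)).tsum_le_tsum hle hh

lemma ContinuousLinearMap.image_segment_eq_uIcc {E : Type*} [AddCommGroup E] [Module ℝ E]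
    [TopologicalSpace E] (f : E →L[ℝ] ℝ) (x y : E) :
    f '' segment ℝ x y = uIcc (f x) (f y) := by
  rw [← segment_eq_uIcc]
  exact image_segment ℝ (f : E →ₗ[ℝ] ℝ).toAffineMap x y

lemma hausdorffMeasure_segment_inter_preimage_add_volume_diff_le {E : Type*}
    [NormedAddCommGroup E] [NormedSpace ℝ E] [MeasurableSpace E] [BorelSpace E]
    (f : E →L[ℝ] ℝ) (hf : ‖f‖ ≤ 1) (x y : E) {I : Set ℝ} (hI : MeasurableSet I) :
    μH[1] (segment ℝ x y ∩ f ⁻¹' I) + volume (uIcc (f x) (f y) \ I) ≤ edist x y := by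
  have hlip : LipschitzWith 1 f := f.lipschitz.weaken (by exact_mod_cast hf)
  have hout : volume (uIcc (f x) (f y) \ I) ≤ μH[1] (segment ℝ x y \ f ⁻¹' I) := by
    calc volume (uIcc (f x) (f y) \ I)
        = μH[1] (f '' (segment ℝ x y \ f ⁻¹' I)) := by
          rw [image_sdiff_preimage, f.image_segment_eq_uIcc, hausdorffMeasure_real]
      _ ≤ μH[1] (segment ℝ x y \ f ⁻¹' I) := by
          simpa using hlip.hausdorffMeasure_image_le zero_le_one (segment ℝ x y \ f ⁻¹' I)
  calc μH[1] (segment ℝ x y ∩ f ⁻¹' I) + volume (uIcc (f x) (f y) \ I)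
      ≤ μH[1] (segment ℝ x y ∩ f ⁻¹' I) + μH[1] (segment ℝ x y \ f ⁻¹' I) := by gcongr
    _ = edist x y := by
      rw [measure_inter_add_sdiff _ (hI.preimage f.continuous.measurable),
        hausdorffMeasure_segment]

namespace EuclideanSpace

lemma norm_proj_le {ι : Type*} [Fintype ι] (k : ι) :
    ‖(EuclideanSpace.proj k : EuclideanSpace ℝ ι →L[ℝ] ℝ)‖ ≤ 1 :=
  ContinuousLinearMap.opNorm_le_bound _ zero_le_one fun x => by
    simpa using PiLp.norm_apply_le x k

lemma norm_sq_eq_sq_add_sq (v : Pt) : ‖v‖ ^ 2 = v 0 ^ 2 + v 1 ^ 2 := by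
  simp [EuclideanSpace.real_norm_sq_eq, Fin.sum_univ_two]

lemma abs_apply_le_norm (v : Pt) (k : Fin 2) : |v k| ≤ ‖v‖ := by
  simpa using PiLp.norm_apply_le v k

lemma max_abs_apply_le_norm (v : Pt) : max |v 0| |v 1| ≤ ‖v‖ :=
  max_le (abs_apply_le_norm v 0) (abs_apply_le_norm v 1)

lemma max_abs_apply_add_le_norm {ε : ℝ} (hε : 0 ≤ ε) (v : Pt) (h : ∀ j, ε * ‖v‖ < |v j|) :
    max |v 0| |v 1| + ε ^ 2 / 2 * ‖v‖ ≤ ‖v‖ := by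
  have hv := norm_sq_eq_sq_add_sq v
  rw [max_add]
  exact max_le (abs_add_sq_mul_le_of_sq_add_sq_eq hε (norm_nonneg v) hv.symm (h 1).le)
    (abs_add_sq_mul_le_of_sq_add_sq_eq hε (norm_nonneg v) (by linarith) (h 0).le)

end EuclideanSpace

lemma toLp_mem_unitSquare {x y : ℝ} (hx : x ∈ Icc 0 1) (hy : y ∈ Icc 0 1) :
    !₂[x, y] ∈ unitSquare := by
  simpa [unitSquare] using ⟨hx, hy⟩

lemma Icc_subset_image_proj_unitSquare (k : Fin 2) :
    Icc 0 1 ⊆ EuclideanSpace.proj k '' unitSquare :=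
  fun c hc => ⟨!₂[c, c], toLp_mem_unitSquare hc hc, by fin_cases k <;> simp⟩

lemma le_volume_inter_Icc_add_ofReal_sub_one {x : ENNReal} {B : ℝ} {I : Set ℝ}
    (hI : MeasurableSet I) (h : x + volume (Icc 0 1 \ I) ≤ ENNReal.ofReal B) :
    x ≤ volume (I ∩ Icc 0 1) + ENNReal.ofReal (B - 1) := by
  have hsplit : volume (I ∩ Icc 0 1) + volume (Icc 0 1 \ I) = 1 := by
    rw [inter_comm, measure_inter_add_sdiff _ hI, Real.volume_Icc, sub_zero, ENNReal.ofReal_one]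
  refine ENNReal.le_of_add_le_add_right (a := volume (Icc 0 1 \ I))
    (ne_top_of_le_ne_top ENNReal.one_ne_top (hsplit ▸ le_add_self)) (h.trans ?_)
  calc ENNReal.ofReal B = ENNReal.ofReal ((B - 1) + 1) := by rw [sub_add_cancel]
    _ ≤ ENNReal.ofReal (B - 1) + 1 := ENNReal.ofReal_add_le.trans (by rw [ENNReal.ofReal_one])
    _ = _ := by rw [← hsplit]; ring

section Barrier

variable {ι : Type*} {a b : ι → Pt}

/-- `nearlyOrth a b ε 1` and `nearlyOrth a b ε 0` are the paper's families `X` and `Y` of almost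
horizontal and almost vertical segments, `oblique a b ε` is `Z`. -/
def nearlyOrth (a b : ι → Pt) (ε : ℝ) (m : Fin 2) : Set ι :=
  {i | |(b i - a i) m| ≤ ε * ‖b i - a i‖}

def oblique (a b : ι → Pt) (ε : ℝ) : Set ι :=
  {i | ∀ j, ε * ‖b i - a i‖ < |(b i - a i) j|}

lemma summable_abs_map_sub (hsum : Summable fun i => ‖b i - a i‖) (f : Pt →L[ℝ] ℝ) :
    Summable fun i => |f (b i - a i)| :=
  (hsum.mul_left ‖f‖).of_nonneg_of_le (fun _ => abs_nonneg _) fun i => by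
    simpa using f.le_opNorm (b i - a i)

lemma summable_abs_apply (hsum : Summable fun i => ‖b i - a i‖) (k : Fin 2) :
    Summable fun i => |(b i - a i) k| :=
  summable_abs_map_sub hsum (EuclideanSpace.proj k)

lemma summable_max_abs_apply (hsum : Summable fun i => ‖b i - a i‖) :
    Summable fun i => max |(b i - a i) 0| |(b i - a i) 1| :=
  hsum.of_nonneg_of_le (fun _ => (abs_nonneg _).trans (le_max_left _ _)) fun _ =>
    EuclideanSpace.max_abs_apply_le_norm _

lemma indicator_compl_nearlyOrth_abs_le {ε : ℝ} (hε : 0 ≤ ε) {k m : Fin 2} (hkm : k ≠ m)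
    (i : ι) :
    (nearlyOrth a b ε m)ᶜ.indicator (fun i => |(b i - a i) k|) i
      ≤ ε * (nearlyOrth a b ε k).indicator (fun i => ‖b i - a i‖) i
        + (oblique a b ε).indicator (fun i => ‖b i - a i‖) i := by
  have hY₀ := indicator_nonneg (fun i _ => norm_nonneg (b i - a i)) i (s := nearlyOrth a b ε k)
  have hZ₀ := indicator_nonneg (fun i _ => norm_nonneg (b i - a i)) i (s := oblique a b ε)
  by_cases hiX : i ∈ nearlyOrth a b ε m
  · rw [indicator_of_notMem (not_not_intro hiX)]
    positivity
  rw [indicator_of_mem (show i ∈ (nearlyOrth a b ε m)ᶜ from hiX)]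
  by_cases hiY : i ∈ nearlyOrth a b ε k
  · rw [indicator_of_mem hiY]
    linarith [show |(b i - a i) k| ≤ ε * ‖b i - a i‖ from hiY]
  have hiZ : i ∈ oblique a b ε := fun j => by
    rcases (by omega : j = k ∨ j = m) with rfl | rfl
    exacts [lt_of_not_ge hiY, lt_of_not_ge hiX]
  rw [indicator_of_mem hiZ, indicator_of_notMem hiY, mul_zero, zero_add]
  exact EuclideanSpace.abs_apply_le_norm _ k

lemma indicator_hausdorffMeasure_inter_strip_add_volume_le (k : Fin 2) (A : Set ι)
    {I : Set ℝ} (hI : MeasurableSet I) (i : ι) :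
    A.indicator (fun i => μH[1] (segment ℝ (a i) (b i) ∩ {p : Pt | p k ∈ I})) i
        + volume (uIcc (a i k) (b i k) \ I)
      ≤ ENNReal.ofReal (A.indicator (fun i => ‖b i - a i‖) i
          + Aᶜ.indicator (fun i => |(b i - a i) k|) i) := by
  by_cases hi : i ∈ A
  · rw [indicator_of_mem hi, indicator_of_mem hi, indicator_of_notMem (not_not_intro hi),
      add_zero, ← dist_eq_norm', ← edist_dist]
    exact hausdorffMeasure_segment_inter_preimage_add_volume_diff_le (EuclideanSpace.proj k)
      (EuclideanSpace.norm_proj_le k) (a i) (b i) hI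
  · rw [indicator_of_notMem hi, indicator_of_notMem hi,
      indicator_of_mem (show i ∈ Aᶜ from hi), zero_add, zero_add]
    calc volume (uIcc (a i k) (b i k) \ I) ≤ volume (uIcc (a i k) (b i k)) :=
          measure_mono sdiff_subset
      _ = ENNReal.ofReal |(b i - a i) k| := Real.volume_interval

variable [Countable ι]

/-- On the plane `f` has a nonzero kernel, so through each point of `C` runs a line on which `f`
is constant; that line meets some segment `sᵢ`, hence the intervals `f(sᵢ)` cover `f(C)`. -/
lemma IsBarrier.volume_image_diff_le_tsum {C : Set Pt}
    (hbar : IsBarrier (⋃ i, segment ℝ (a i) (b i)) C) (f : Pt →L[ℝ] ℝ) (T : Set ℝ) :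
    volume (f '' C \ T) ≤ ∑' i, volume (uIcc (f (a i)) (f (b i)) \ T) := by
  obtain ⟨v, hv, hv0⟩ := Submodule.exists_mem_ne_zero_of_ne_bot
    ((f : Pt →ₗ[ℝ] ℝ).ker_ne_bot_of_finrank_lt (by simp))
  have hcover : f '' C \ T ⊆ ⋃ i, uIcc (f (a i)) (f (b i)) \ T := by
    rintro _ ⟨⟨q, hqC, rfl⟩, hqT⟩
    obtain ⟨r, ⟨t, rfl⟩, hr⟩ := hbar {r | ∃ t : ℝ, r = q + t • v} ⟨q, v, hv0, rfl⟩
      ⟨q, ⟨0, by simp⟩, hqC⟩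
    obtain ⟨i, hi⟩ := mem_iUnion.1 hr
    refine mem_iUnion.2 ⟨i, ?_, ?_⟩
    · have hfv : f v = 0 := hv
      simpa [hfv, f.image_segment_eq_uIcc] using mem_image_of_mem f hi
    · exact hqT
  exact (measure_mono hcover).trans (measure_iUnion_le _)

lemma IsBarrier.sub_le_tsum_abs {C : Set Pt} (hbar : IsBarrier (⋃ i, segment ℝ (a i) (b i)) C)
    (hsum : Summable fun i => ‖b i - a i‖) (f : Pt →L[ℝ] ℝ) {u w : ℝ} (h : Icc u w ⊆ f '' C) :
    w - u ≤ ∑' i, |f (b i - a i)| := by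
  rw [← ENNReal.ofReal_le_ofReal_iff (tsum_nonneg fun _ => abs_nonneg _),
    ENNReal.ofReal_tsum_of_nonneg (fun _ => abs_nonneg _) (summable_abs_map_sub hsum f),
    ← Real.volume_Icc]
  calc volume (Icc u w) ≤ volume (f '' C \ ∅) := by rw [sdiff_empty]; exact measure_mono h
    _ ≤ ∑' i, volume (uIcc (f (a i)) (f (b i)) \ ∅) := hbar.volume_image_diff_le_tsum f ∅
    _ = ∑' i, ENNReal.ofReal |f (b i - a i)| := by simp [Real.volume_interval]

variable (hbar : IsBarrier (⋃ i, segment ℝ (a i) (b i)) unitSquare)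
  (hsum : Summable fun i => ‖b i - a i‖)
include hbar hsum

lemma IsBarrier.one_le_tsum_abs_apply (k : Fin 2) : 1 ≤ ∑' i, |(b i - a i) k| := by
  simpa using hbar.sub_le_tsum_abs hsum (EuclideanSpace.proj k) (Icc_subset_image_proj_unitSquare k)

lemma IsBarrier.two_le_tsum_max_abs : 2 ≤ ∑' i, max |(b i - a i) 0| |(b i - a i) 1| := by
  let p₀ : Pt →L[ℝ] ℝ := EuclideanSpace.proj 0
  let p₁ : Pt →L[ℝ] ℝ := EuclideanSpace.proj 1
  have hadd := hbar.sub_le_tsum_abs hsum (p₀ + p₁) (u := 0) (w := 2) fun c hc =>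
    have hc' : c / 2 ∈ Icc (0 : ℝ) 1 := ⟨by linarith [hc.1], by linarith [hc.2]⟩
    ⟨!₂[c / 2, c / 2], toLp_mem_unitSquare hc' hc', by simp [p₀, p₁]⟩
  have hsub := hbar.sub_le_tsum_abs hsum (p₀ - p₁) (u := -1) (w := 1) fun c hc =>
    ⟨!₂[(1 + c) / 2, (1 - c) / 2],
      toLp_mem_unitSquare ⟨by linarith [hc.1], by linarith [hc.2]⟩
        ⟨by linarith [hc.2], by linarith [hc.1]⟩,
      by simp [p₀, p₁]; ring⟩
  have hle := (summable_abs_map_sub hsum (p₀ + p₁)).tsum_add_mul_le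
    (summable_abs_map_sub hsum (p₀ - p₁)) ((summable_max_abs_apply hsum).mul_left 2) 1 fun i => by
      simpa [p₀, p₁] using abs_add_add_abs_sub_le_two_mul_max ((b i - a i) 0) ((b i - a i) 1)
  rw [tsum_mul_left] at hle
  linarith

lemma IsBarrier.mul_tsum_indicator_nearlyOrth_le {δ : ℝ} (hL : ∑' i, ‖b i - a i‖ ≤ 2 + δ)
    (ε : ℝ) (m : Fin 2) :
    (1 - ε) * ∑' i, (nearlyOrth a b ε m).indicator (fun i => ‖b i - a i‖) i ≤ 1 + δ := by
  have hle := (summable_abs_apply hsum m).tsum_add_mul_le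
    (hsum.indicator (nearlyOrth a b ε m)) hsum (1 - ε) fun i => by
      by_cases hi : i ∈ nearlyOrth a b ε m
      · rw [indicator_of_mem hi]
        linarith [show |(b i - a i) m| ≤ ε * ‖b i - a i‖ from hi]
      · rw [indicator_of_notMem hi, mul_zero, add_zero]
        exact EuclideanSpace.abs_apply_le_norm _ m
  linarith [hbar.one_le_tsum_abs_apply hsum m]

lemma IsBarrier.mul_tsum_indicator_oblique_le {ε δ : ℝ} (hε : 0 ≤ ε)
    (hL : ∑' i, ‖b i - a i‖ ≤ 2 + δ) :
    ε ^ 2 / 2 * ∑' i, (oblique a b ε).indicator (fun i => ‖b i - a i‖) i ≤ δ := by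
  have hle := (summable_max_abs_apply hsum).tsum_add_mul_le (hsum.indicator (oblique a b ε)) hsum
    (ε ^ 2 / 2) fun i => by
      by_cases hi : i ∈ oblique a b ε
      · rw [indicator_of_mem hi]
        exact EuclideanSpace.max_abs_apply_add_le_norm hε _ hi
      · rw [indicator_of_notMem hi, mul_zero, add_zero]
        exact EuclideanSpace.max_abs_apply_le_norm _
  linarith [hbar.two_le_tsum_max_abs hsum]

lemma IsBarrier.tsum_indicator_nearlyOrth_add_tsum_indicator_abs_le {ε δ : ℝ} (hε₀ : 0 < ε)
    (hε₁ : ε < 1) (hL : ∑' i, ‖b i - a i‖ ≤ 2 + δ) {k m : Fin 2} (hkm : k ≠ m) :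
    ∑' i, (nearlyOrth a b ε m).indicator (fun i => ‖b i - a i‖) i
        + ∑' i, (nearlyOrth a b ε m)ᶜ.indicator (fun i => |(b i - a i) k|) i
      ≤ (1 + ε) * (1 + δ) / (1 - ε) + 2 * δ / ε ^ 2 := by
  have hX := hbar.mul_tsum_indicator_nearlyOrth_le hsum hL ε m
  have hY := hbar.mul_tsum_indicator_nearlyOrth_le hsum hL ε k
  have hZ := hbar.mul_tsum_indicator_oblique_le hsum hε₀.le hL
  have hrest : ∑' i, (nearlyOrth a b ε m)ᶜ.indicator (fun i => |(b i - a i) k|) i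
      ≤ ε * ∑' i, (nearlyOrth a b ε k).indicator (fun i => ‖b i - a i‖) i
        + ∑' i, (oblique a b ε).indicator (fun i => ‖b i - a i‖) i := by
    rw [← tsum_mul_left, ← ((hsum.indicator _).mul_left ε).tsum_add (hsum.indicator _)]
    exact ((summable_abs_apply hsum k).indicator _).tsum_le_tsum
      (indicator_compl_nearlyOrth_abs_le hε₀.le hkm)
      (((hsum.indicator _).mul_left ε).add (hsum.indicator _))
  have hXY : ∑' i, (nearlyOrth a b ε m).indicator (fun i => ‖b i - a i‖) i
      + ε * ∑' i, (nearlyOrth a b ε k).indicator (fun i => ‖b i - a i‖) i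
      ≤ (1 + ε) * (1 + δ) / (1 - ε) := by
    rw [le_div_iff₀ (by linarith)]
    nlinarith [mul_le_mul_of_nonneg_left hY hε₀.le]
  have hZ' : ∑' i, (oblique a b ε).indicator (fun i => ‖b i - a i‖) i ≤ 2 * δ / ε ^ 2 := by
    rw [le_div_iff₀ (by positivity)]
    linarith
  linarith

lemma IsBarrier.tsum_hausdorffMeasure_inter_strip_add_volume_le (k : Fin 2) (A : Set ι)
    {I : Set ℝ} (hI : MeasurableSet I) :
    (∑' i : A, μH[1] (segment ℝ (a i) (b i) ∩ {p : Pt | p k ∈ I})) + volume (Icc 0 1 \ I)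
      ≤ ENNReal.ofReal (∑' i, A.indicator (fun i => ‖b i - a i‖) i
          + ∑' i, Aᶜ.indicator (fun i => |(b i - a i) k|) i) := by
  have hs₁ := hsum.indicator A
  have hs₂ := (summable_abs_apply hsum k).indicator Aᶜ
  have hcover : volume (Icc 0 1 \ I) ≤ ∑' i, volume (uIcc (a i k) (b i k) \ I) :=
    (measure_mono (sdiff_subset_sdiff_left (Icc_subset_image_proj_unitSquare k))).trans
      (hbar.volume_image_diff_le_tsum (EuclideanSpace.proj k) I)
  have hnonneg (i : ι) : 0 ≤ A.indicator (fun i => ‖b i - a i‖) i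
      + Aᶜ.indicator (fun i => |(b i - a i) k|) i :=
    add_nonneg (indicator_nonneg (fun i _ => norm_nonneg _) i)
      (indicator_nonneg (fun i _ => abs_nonneg _) i)
  rw [tsum_subtype A fun i => μH[1] (segment ℝ (a i) (b i) ∩ {p : Pt | p k ∈ I}),
    ← hs₁.tsum_add hs₂, ENNReal.ofReal_tsum_of_nonneg hnonneg (hs₁.add hs₂)]
  calc _ ≤ _ := add_le_add le_rfl hcover
    _ = _ := ENNReal.tsum_add.symm
    _ ≤ _ := ENNReal.tsum_le_tsum
      (indicator_hausdorffMeasure_inter_strip_add_volume_le k A hI)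

end Barrier

theorem X_in_strip_Y_in_strip_bounds_general
    (a b : ℕ → Pt)
    (hbar : IsBarrier (⋃ i, segment ℝ (a i) (b i)) unitSquare)
    (hsum : Summable fun i => ‖b i - a i‖)
    (hL : ∑' i, ‖b i - a i‖ ≤ 2 + 10 ^ (-12 : ℤ)) :
    (∀ I : Set ℝ, I.OrdConnected →
      ∑' i : {j : ℕ // AlmostHorizontal (a j) (b j)},
          μH[1] (segment ℝ (a i.1) (b i.1) ∩ {p : Pt | p 0 ∈ I})
        ≤ volume (I ∩ Icc (0:ℝ) 1) + ENNReal.ofReal (5 * 10 ^ (-4 : ℤ))) ∧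
    (∀ J : Set ℝ, J.OrdConnected →
      ∑' i : {j : ℕ // AlmostVertical (a j) (b j)},
          μH[1] (segment ℝ (a i.1) (b i.1) ∩ {p : Pt | p 1 ∈ J})
        ≤ volume (J ∩ Icc (0:ℝ) 1) + ENNReal.ofReal (5 * 10 ^ (-4 : ℤ))) := by
  have key (k m : Fin 2) (hkm : k ≠ m) (I : Set ℝ) (hI : MeasurableSet I) :
      ∑' i : nearlyOrth a b (10 ^ (-4 : ℤ)) m,
          μH[1] (segment ℝ (a i) (b i) ∩ {p : Pt | p k ∈ I})
        ≤ volume (I ∩ Icc (0:ℝ) 1) + ENNReal.ofReal (5 * 10 ^ (-4 : ℤ)) := by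
    refine (le_volume_inter_Icc_add_ofReal_sub_one hI
      (hbar.tsum_hausdorffMeasure_inter_strip_add_volume_le hsum k _ hI)).trans
      (add_le_add le_rfl (ENNReal.ofReal_le_ofReal ?_))
    have hbound := hbar.tsum_indicator_nearlyOrth_add_tsum_indicator_abs_le hsum
      (ε := 10 ^ (-4 : ℤ)) (by norm_num) (by norm_num) hL hkm
    have hnum : (1 + (10 : ℝ) ^ (-4 : ℤ)) * (1 + 10 ^ (-12 : ℤ)) / (1 - 10 ^ (-4 : ℤ))
        + 2 * 10 ^ (-12 : ℤ) / (10 ^ (-4 : ℤ)) ^ 2 ≤ 1 + 5 * 10 ^ (-4 : ℤ) := by norm_num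
    rw [sub_le_iff_le_add']
    exact hbound.trans hnum
  exact ⟨fun I hI => key 0 1 (by decide) I hI.measurableSet,
    fun J hJ => key 1 0 (by decide) J hJ.measurableSet⟩

/-- Lemma 6: for a segment barrier of the unit square of total length at most
2 + δ (δ = 10⁻¹², sin φ = 10⁻⁴), for any intervals I, J ⊆ ℝ, the part of the almost
horizontal segments X inside the vertical strip I × ℝ has total length at most
λ(I ∩ [0,1]) + 5 sin φ, and the part of the almost vertical segments Y inside the
horizontal strip ℝ × J has total length at most λ(J ∩ [0,1]) + 5 sin φ. -/
theorem X_in_strip_Y_in_strip_bounds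
    (a b : ℕ → Pt) (hab : ∀ i, a i ≠ b i)
    (hbar : IsBarrier (⋃ i, segment ℝ (a i) (b i)) unitSquare)
    (hsum : Summable fun i => ‖b i - a i‖)
    (hL : ∑' i, ‖b i - a i‖ ≤ 2 + 10 ^ (-12 : ℤ)) :
    (∀ I : Set ℝ, I.OrdConnected →
      ∑' i : {j : ℕ // AlmostHorizontal (a j) (b j)},
          μH[1] (segment ℝ (a i.1) (b i.1) ∩ {p : Pt | p 0 ∈ I})
        ≤ volume (I ∩ Icc (0:ℝ) 1) + ENNReal.ofReal (5 * 10 ^ (-4 : ℤ))) ∧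
    (∀ J : Set ℝ, J.OrdConnected →
      ∑' i : {j : ℕ // AlmostVertical (a j) (b j)},
          μH[1] (segment ℝ (a i.1) (b i.1) ∩ {p : Pt | p 1 ∈ J})
        ≤ volume (J ∩ Icc (0:ℝ) 1) + ENNReal.ofReal (5 * 10 ^ (-4 : ℤ))) :=
  X_in_strip_Y_in_strip_bounds_general a b hbar hsum hL
end
end

section
/- With the setup parameter δ = 10⁻¹², let Γ be a segment barrier for the unit square U given by segments sᵢ with total length L ≤ 2 + δ. Let Q₂ = {(x, y) ∈ ℝ² : |x − 1/2| + |y − 1/2| ≤ 1} be the square of side length √2 concentric with U and rotated by π/4. Then Σᵢ H¹(sᵢ \ Q₂) ≤ 4δ. -/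
open MeasureTheory Set

noncomputable section

open scoped NNReal ENNReal

/-! Every line `x + y = r` (`0 ≤ r ≤ 2`) and every line `x - y = r` (`-1 ≤ r ≤ 1`) meets `U`,
hence the barrier, so the images of the barrier under `x + y` and `x - y` have measure at least
`2` each. On a segment with unit direction `u` these maps scale length by `|u₀ + u₁|` and
`|u₀ - u₁|`, which sum to at most `2` and are each at most `√2 < 3/2`; moreover only the part of
the barrier in the strips `0 ≤ x + y ≤ 2`, resp. `-1 ≤ x - y ≤ 1`, is needed, and a point outside
`Q₂` lies in at most one of them. Hence each unit of length outside `Q₂` contributes at most `3/2`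
instead of `2`, giving `4 + ½ · (length outside Q₂) ≤ 2 L ≤ 4 + 2δ`. -/

theorem ContinuousLinearMap.lipschitzOnWith_segment {E : Type*} [NormedAddCommGroup E]
    [NormedSpace ℝ E] (ℓ : E →L[ℝ] ℝ) (a b : E) :
    LipschitzOnWith (‖ℓ (b - a)‖₊ / ‖b - a‖₊) ℓ (segment ℝ a b) := by
  refine LipschitzOnWith.of_dist_le_mul fun p hp q hq => ?_
  rw [segment_eq_image'] at hp hq
  obtain ⟨s, -, rfl⟩ := hp
  obtain ⟨t, -, rfl⟩ := hq
  have hdist : dist (a + s • (b - a)) (a + t • (b - a)) = |s - t| * ‖b - a‖ := by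
    rw [dist_add_left, dist_eq_norm, ← sub_smul, norm_smul, Real.norm_eq_abs]
  rw [hdist, Real.dist_eq, map_add, map_add, map_smul, map_smul, add_sub_add_left_eq_sub,
    ← sub_smul, smul_eq_mul, abs_mul, NNReal.coe_div, coe_nnnorm, coe_nnnorm, Real.norm_eq_abs]
  rcases eq_or_ne (b - a) 0 with h | h
  · simp [h]
  · rw [div_mul_eq_mul_div, mul_div_assoc, mul_div_cancel_right₀ _ (norm_ne_zero_iff.2 h),
      mul_comm]

theorem ContinuousLinearMap.volume_image_iUnion_segment_inter_le {E ι : Type*}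
    [NormedAddCommGroup E] [NormedSpace ℝ E] [MeasurableSpace E] [BorelSpace E] [Countable ι]
    (ℓ : E →L[ℝ] ℝ) (a b : ι → E) (T : Set E) :
    volume (ℓ '' ((⋃ i, segment ℝ (a i) (b i)) ∩ T)) ≤
      ∑' i, (‖ℓ (b i - a i)‖₊ / ‖b i - a i‖₊ : ℝ≥0) * μH[1] (segment ℝ (a i) (b i) ∩ T) := by
  rw [iUnion_inter, image_iUnion, ← hausdorffMeasure_real]
  refine (measure_iUnion_le _).trans (ENNReal.tsum_le_tsum fun i => ?_)
  simpa using ((ℓ.lipschitzOnWith_segment (a i) (b i)).mono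
    inter_subset_left).hausdorffMeasure_image_le zero_le_one

theorem IsBarrier.image_subset {Γ C : Set Pt} (h : IsBarrier Γ C) (ℓ : Pt →ₗ[ℝ] ℝ) :
    ℓ '' C ⊆ ℓ '' Γ := by
  rintro _ ⟨c, hc, rfl⟩
  obtain ⟨v, hv, hv0⟩ := (Submodule.ne_bot_iff _).1 (ℓ.ker_ne_bot_of_finrank_lt (by simp))
  obtain ⟨_, ⟨t, rfl⟩, hq⟩ :=
    h {q | ∃ t : ℝ, q = c + t • v} ⟨c, v, hv0, rfl⟩ ⟨c, ⟨0, by simp⟩, hc⟩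
  exact ⟨_, hq, by simp [LinearMap.mem_ker.1 hv]⟩

theorem IsBarrier.volume_le_tsum {C : Set Pt} {ι : Type*} [Countable ι] {a b : ι → Pt}
    (h : IsBarrier (⋃ i, segment ℝ (a i) (b i)) C) (ℓ : Pt →L[ℝ] ℝ) {I : Set ℝ}
    (hI : I ⊆ ℓ '' C) :
    volume I ≤
      ∑' i, (‖ℓ (b i - a i)‖₊ / ‖b i - a i‖₊ : ℝ≥0) * μH[1] (segment ℝ (a i) (b i) ∩ ℓ ⁻¹' I) := by
  refine le_trans (measure_mono ?_) (ℓ.volume_image_iUnion_segment_inter_le a b _)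
  rw [image_inter_preimage]
  exact subset_inter (hI.trans (h.image_subset (ℓ : Pt →ₗ[ℝ] ℝ))) subset_rfl

theorem mul_measure_add_mul_measure_add_mul_measure_compl_inter_le {α : Type*}
    [MeasurableSpace α] (μ : Measure α) {S₁ S₂ : Set α} (h₁ : MeasurableSet S₁)
    (h₂ : MeasurableSet S₂) {c₁ c₂ d C : ℝ≥0∞} (hc : c₁ + c₂ ≤ C) (hc₁ : c₁ + d ≤ C)
    (hc₂ : c₂ + d ≤ C) :
    c₁ * μ S₁ + c₂ * μ S₂ + d * μ (S₁ ∩ S₂)ᶜ ≤ C * μ univ := by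
  have hd : d ≤ C := le_add_self.trans hc₁
  have hpoint : ∀ x, S₁.indicator (fun _ => c₁) x + S₂.indicator (fun _ => c₂) x
      + (S₁ ∩ S₂)ᶜ.indicator (fun _ => d) x ≤ C := by
    intro x
    by_cases hx₁ : x ∈ S₁ <;> by_cases hx₂ : x ∈ S₂ <;> simp [*]
  calc c₁ * μ S₁ + c₂ * μ S₂ + d * μ (S₁ ∩ S₂)ᶜ
      = ∫⁻ x, S₁.indicator (fun _ => c₁) x + S₂.indicator (fun _ => c₂) x
          + (S₁ ∩ S₂)ᶜ.indicator (fun _ => d) x ∂μ := by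
        rw [lintegral_add_right _ (measurable_const.indicator (h₁.inter h₂).compl),
          lintegral_add_right _ (measurable_const.indicator h₂), lintegral_indicator_const h₁,
          lintegral_indicator_const h₂, lintegral_indicator_const (h₁.inter h₂).compl]
    _ ≤ ∫⁻ _, C ∂μ := lintegral_mono hpoint
    _ = C * μ univ := lintegral_const C

def coordSum : Pt →L[ℝ] ℝ := EuclideanSpace.proj 0 + EuclideanSpace.proj 1

def coordDiff : Pt →L[ℝ] ℝ := EuclideanSpace.proj 0 - EuclideanSpace.proj 1

@[simp] theorem coordSum_apply (p : Pt) : coordSum p = p 0 + p 1 := rfl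

@[simp] theorem coordDiff_apply (p : Pt) : coordDiff p = p 0 - p 1 := rfl

theorem Icc_subset_coordSum_image_unitSquare : Icc 0 2 ⊆ coordSum '' unitSquare := by
  rintro r ⟨hr₀, hr₂⟩
  refine ⟨!₂[r / 2, r / 2], ?_, by simp⟩
  refine ⟨⟨?_, ?_⟩, ?_, ?_⟩ <;> simp <;> linarith

theorem Icc_subset_coordDiff_image_unitSquare : Icc (-1) 1 ⊆ coordDiff '' unitSquare := by
  rintro r ⟨hr₀, hr₁⟩
  refine ⟨!₂[(1 + r) / 2, (1 - r) / 2], ?_, by simp; ring⟩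
  refine ⟨⟨?_, ?_⟩, ?_, ?_⟩ <;> simp <;> linarith

theorem nnnorm_coordSum_add_nnnorm_coordDiff_le (v : Pt) :
    ‖coordSum v‖₊ + ‖coordDiff v‖₊ ≤ 2 * ‖v‖₊ := by
  have hv := EuclideanSpace.real_norm_sq_eq v
  simp only [Fin.sum_univ_two] at hv
  rw [← NNReal.coe_le_coe]
  push_cast [coe_nnnorm, Real.norm_eq_abs, coordSum_apply, coordDiff_apply]
  rcases abs_cases (v 0 + v 1) with ⟨h₁, -⟩ | ⟨h₁, -⟩ <;>
    rcases abs_cases (v 0 - v 1) with ⟨h₂, -⟩ | ⟨h₂, -⟩ <;> rw [h₁, h₂] <;>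
    nlinarith [norm_nonneg v, sq_nonneg (v 0 - ‖v‖), sq_nonneg (v 0 + ‖v‖),
      sq_nonneg (v 1 - ‖v‖), sq_nonneg (v 1 + ‖v‖)]

theorem nnnorm_coordSum_le (v : Pt) : ‖coordSum v‖₊ ≤ 3 / 2 * ‖v‖₊ := by
  have hv := EuclideanSpace.real_norm_sq_eq v
  simp only [Fin.sum_univ_two] at hv
  rw [← NNReal.coe_le_coe]
  push_cast [coe_nnnorm, Real.norm_eq_abs, coordSum_apply]
  exact abs_le_of_sq_le_sq (by nlinarith [sq_nonneg (v 0 - v 1)]) (by positivity)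

theorem nnnorm_coordDiff_le (v : Pt) : ‖coordDiff v‖₊ ≤ 3 / 2 * ‖v‖₊ := by
  have hv := EuclideanSpace.real_norm_sq_eq v
  simp only [Fin.sum_univ_two] at hv
  rw [← NNReal.coe_le_coe]
  push_cast [coe_nnnorm, Real.norm_eq_abs, coordDiff_apply]
  exact abs_le_of_sq_le_sq (by nlinarith [sq_nonneg (v 0 + v 1)]) (by positivity)

def rotatedSquare : Set Pt := {p : Pt | |p 0 - 1/2| + |p 1 - 1/2| ≤ 1}

theorem rotatedSquare_eq_preimage_inter_preimage :
    rotatedSquare = coordSum ⁻¹' Icc 0 2 ∩ coordDiff ⁻¹' Icc (-1) 1 := by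
  ext p
  simp only [rotatedSquare, mem_ofPred_eq, mem_inter_iff, mem_preimage, mem_Icc, coordSum_apply,
    coordDiff_apply]
  constructor
  · intro h
    refine ⟨⟨?_, ?_⟩, ?_, ?_⟩ <;> linarith [neg_abs_le (p 0 - 1/2), le_abs_self (p 0 - 1/2),
      neg_abs_le (p 1 - 1/2), le_abs_self (p 1 - 1/2)]
  · rintro ⟨⟨h₁, h₂⟩, h₃, h₄⟩
    rcases abs_cases (p 0 - 1/2) with ⟨e₁, -⟩ | ⟨e₁, -⟩ <;>
      rcases abs_cases (p 1 - 1/2) with ⟨e₂, -⟩ | ⟨e₂, -⟩ <;> linarith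

theorem segment_weighted_measure_le (a b : Pt) :
    (‖coordSum (b - a)‖₊ / ‖b - a‖₊ : ℝ≥0) * μH[1] (segment ℝ a b ∩ coordSum ⁻¹' Icc 0 2)
      + (‖coordDiff (b - a)‖₊ / ‖b - a‖₊ : ℝ≥0) *
          μH[1] (segment ℝ a b ∩ coordDiff ⁻¹' Icc (-1) 1)
      + 2⁻¹ * μH[1] (segment ℝ a b \ rotatedSquare)
      ≤ 2 * edist a b := by
  set v := b - a
  have hS₁ : MeasurableSet (coordSum ⁻¹' Icc (0 : ℝ) 2) :=
    coordSum.continuous.measurable measurableSet_Icc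
  have hS₂ : MeasurableSet (coordDiff ⁻¹' Icc (-1 : ℝ) 1) :=
    coordDiff.continuous.measurable measurableSet_Icc
  have hK : ‖coordSum v‖₊ / ‖v‖₊ + ‖coordDiff v‖₊ / ‖v‖₊ ≤ 2 := by
    rw [← add_div]
    exact div_le_of_le_mul₀ zero_le zero_le (nnnorm_coordSum_add_nnnorm_coordDiff_le v)
  have hK₁ : ‖coordSum v‖₊ / ‖v‖₊ + 2⁻¹ ≤ 2 := by
    have := div_le_of_le_mul₀ zero_le zero_le (nnnorm_coordSum_le v)
    exact (add_le_add this le_rfl).trans (by norm_num)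
  have hK₂ : ‖coordDiff v‖₊ / ‖v‖₊ + 2⁻¹ ≤ 2 := by
    have := div_le_of_le_mul₀ zero_le zero_le (nnnorm_coordDiff_le v)
    exact (add_le_add this le_rfl).trans (by norm_num)
  have := mul_measure_add_mul_measure_add_mul_measure_compl_inter_le
    (μH[1].restrict (segment ℝ a b)) hS₁ hS₂ (c₁ := (‖coordSum v‖₊ / ‖v‖₊ : ℝ≥0))
    (c₂ := (‖coordDiff v‖₊ / ‖v‖₊ : ℝ≥0)) (d := ((2⁻¹ : ℝ≥0) : ℝ≥0∞)) (C := ((2 : ℝ≥0) : ℝ≥0∞))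
    (by exact_mod_cast hK) (by exact_mod_cast hK₁) (by exact_mod_cast hK₂)
  rw [rotatedSquare_eq_preimage_inter_preimage]
  rwa [Measure.restrict_apply hS₁, Measure.restrict_apply hS₂,
    Measure.restrict_apply (hS₁.inter hS₂).compl, Measure.restrict_apply_univ,
    hausdorffMeasure_segment, ENNReal.coe_inv_two, ENNReal.coe_two, inter_comm,
    inter_comm _ (segment ℝ a b), ← sdiff_eq_compl_inter] at this

theorem IsBarrier.four_add_half_tsum_measure_diff_rotatedSquare_le {ι : Type*} [Countable ι]
    {a b : ι → Pt} (hbar : IsBarrier (⋃ i, segment ℝ (a i) (b i)) unitSquare) :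
    4 + 2⁻¹ * ∑' i, μH[1] (segment ℝ (a i) (b i) \ rotatedSquare) ≤
      2 * ∑' i, edist (a i) (b i) := by
  have hvol : volume (Icc (0 : ℝ) 2) + volume (Icc (-1 : ℝ) 1) = 4 := by
    rw [Real.volume_Icc, Real.volume_Icc, ← ENNReal.ofReal_add] <;> norm_num
  rw [← ENNReal.tsum_mul_left, ← ENNReal.tsum_mul_left, ← hvol]
  refine le_trans ?_ (ENNReal.tsum_le_tsum fun i => segment_weighted_measure_le (a i) (b i))
  rw [ENNReal.tsum_add, ENNReal.tsum_add]
  gcongr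
  exacts [hbar.volume_le_tsum coordSum Icc_subset_coordSum_image_unitSquare,
    hbar.volume_le_tsum coordDiff Icc_subset_coordDiff_image_unitSquare]

theorem barrier_outside_Q2_small_general
    (a b : ℕ → Pt)
    (hbar : IsBarrier (⋃ i, segment ℝ (a i) (b i)) unitSquare)
    (hsum : Summable fun i => ‖b i - a i‖)
    (hL : ∑' i, ‖b i - a i‖ ≤ 2 + 10 ^ (-12 : ℤ)) :
    ∑' i, μH[1] (segment ℝ (a i) (b i) \ {p : Pt | |p 0 - 1/2| + |p 1 - 1/2| ≤ 1})
      ≤ ENNReal.ofReal (4 * 10 ^ (-12 : ℤ)) := by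
  set δ : ℝ := 10 ^ (-12 : ℤ)
  have hδ : 0 ≤ δ := by positivity
  have hlen : ∑' i, edist (a i) (b i) = ENNReal.ofReal (∑' i, ‖b i - a i‖) := by
    rw [ENNReal.ofReal_tsum_of_nonneg (fun i => norm_nonneg _) hsum]
    simp [edist_dist, dist_eq_norm, norm_sub_rev]
  have hlen_le : 2 * ENNReal.ofReal (∑' i, ‖b i - a i‖) ≤ 4 + 2 * ENNReal.ofReal δ :=
    calc 2 * ENNReal.ofReal (∑' i, ‖b i - a i‖) ≤ 2 * ENNReal.ofReal (2 + δ) := by gcongr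
      _ = 4 + 2 * ENNReal.ofReal δ := by
        rw [ENNReal.ofReal_add zero_le_two hδ, mul_add, ENNReal.ofReal_ofNat]
        norm_num
  have key := hbar.four_add_half_tsum_measure_diff_rotatedSquare_le
  rw [hlen] at key
  have hB := ENNReal.le_of_add_le_add_left ENNReal.ofNat_ne_top (key.trans hlen_le)
  rw [ENNReal.inv_mul_le_iff two_ne_zero ENNReal.ofNat_ne_top, ← mul_assoc] at hB
  calc _ ≤ 2 * 2 * ENNReal.ofReal δ := hB
    _ = ENNReal.ofReal (4 * δ) := by rw [ENNReal.ofReal_mul (by norm_num)]; norm_num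

/-- Lemma 7: for a segment barrier of the unit square of total length at most
2 + δ (δ = 10⁻¹²), the total length of the parts of the segments outside the rotated square
Q₂ = {(x,y) : |x − 1/2| + |y − 1/2| ≤ 1} is at most 4δ. -/
theorem barrier_outside_Q2_small
    (a b : ℕ → Pt) (hab : ∀ i, a i ≠ b i)
    (hbar : IsBarrier (⋃ i, segment ℝ (a i) (b i)) unitSquare)
    (hsum : Summable fun i => ‖b i - a i‖)
    (hL : ∑' i, ‖b i - a i‖ ≤ 2 + 10 ^ (-12 : ℤ)) :
    ∑' i, μH[1] (segment ℝ (a i) (b i) \ {p : Pt | |p 0 - 1/2| + |p 1 - 1/2| ≤ 1})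
      ≤ ENNReal.ofReal (4 * 10 ^ (-12 : ℤ)) :=
  barrier_outside_Q2_small_general a b hbar hsum hL
end
end
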